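/- Let p be a prime, s ≥ 1 a natural number, k a natural number, n₁, …, n_s natural numbers with k ≤ n_i for every i, and m₁, …, m_s natural numbers. Write M = m₁ + ⋯ + m_s and T = n₁m₁ + ⋯ + n_s m_s. Then, in ℚ_p, the sequence N ↦ (1/p^N) · ∑_{x=0}^{p^N − 1} ∏_{i=1}^{s} (B_{k,n_i}(x))^{m_i} tends (as N → ∞) to the rational number (∏_{i=1}^{s} C(n_i, k)^{m_i}) · ∑_{l=0}^{T − M·k} C(T − M·k, l) (−1)^l B_{M·k + l}, cast into ℚ_p. (Equivalently, ∫_{ℤ_p} B_{k,n₁}^{m₁}(x) ⋯ B_{k,n_s}^{m_s}(x) dμ₁(x) = C(n₁,k)^{m₁} ⋯ C(n_s,k)^{m_s} ∑_{l=0}^{T−Mk} C(T−Mk, l)(−1)^l B_{Mk+l}.) -/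

import Mathlib

/-!
By Faulhaber's formula, the `N`-th Volkenborn sum of `x ^ n` is `B_n` plus a linear combination
of the sequences `(p ^ (n - i)) ^ N` with `i < n`, which tend to `0` in `ℚ_p`; hence
`∫ x ^ n dμ₁ = B_n`. The product of Bernstein powers equals
`∏ C(nᵢ, k) ^ mᵢ · x ^ (M k) (1 - x) ^ (T - M k)`, and expanding `(1 - x) ^ (T - M k)`
binomially and integrating term by term gives the formula.
-/

open Filter Finset Topology

section Volkenborn

variable {p : ℕ} [Fact p.Prime]

noncomputable def volkenbornSum (f : ℕ → ℚ_[p]) (N : ℕ) : ℚ_[p] :=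
  (1 / (p : ℚ_[p]) ^ N) * ∑ x ∈ range (p ^ N), f x

lemma volkenbornSum_sum {ι : Type*} (s : Finset ι) (c : ι → ℚ_[p]) (f : ι → ℕ → ℚ_[p])
    (N : ℕ) :
    volkenbornSum (fun x => ∑ l ∈ s, c l * f l x) N = ∑ l ∈ s, c l * volkenbornSum (f l) N := by
  simp only [volkenbornSum, Finset.mul_sum]
  rw [Finset.sum_comm]
  exact Finset.sum_congr rfl fun l _ => Finset.sum_congr rfl fun x _ => by ring

lemma volkenbornSum_pow (n N : ℕ) :
    volkenbornSum (fun x => (x : ℚ_[p]) ^ n) N =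
      ∑ i ∈ range n, (bernoulli i : ℚ_[p]) * (n + 1).choose i / (n + 1) *
        ((p : ℚ_[p]) ^ (n - i)) ^ N + (bernoulli n : ℚ_[p]) := by
  have hp : (p : ℚ_[p]) ^ N ≠ 0 :=
    pow_ne_zero _ (Nat.cast_ne_zero.mpr (Fact.out : p.Prime).ne_zero)
  have faulhaber := congrArg (fun q : ℚ => (q : ℚ_[p])) (sum_range_pow (p ^ N) n)
  push_cast at faulhaber
  rw [volkenbornSum, faulhaber, sum_range_succ, Nat.choose_succ_self_right, Nat.add_sub_cancel_left,
    mul_add, Finset.mul_sum]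
  congr 1
  · refine Finset.sum_congr rfl fun i hi => ?_
    rw [show n + 1 - i = n - i + 1 by have := mem_range.mp hi; omega]
    field_simp
    ring
  · push_cast
    field_simp

lemma tendsto_volkenbornSum_pow (n : ℕ) :
    Tendsto (volkenbornSum fun x => (x : ℚ_[p]) ^ n) atTop (𝓝 (bernoulli n : ℚ_[p])) := by
  simp only [funext (volkenbornSum_pow n)]
  conv => enter [3, 1]; rw [← zero_add (bernoulli n : ℚ_[p])]
  refine Tendsto.add_const _ ?_
  rw [← Finset.sum_const_zero (s := range n)]
  refine tendsto_finsetSum _ fun i hi => ?_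
  have hnorm : ‖(p : ℚ_[p]) ^ (n - i)‖ < 1 := by
    rw [norm_pow]
    exact pow_lt_one₀ (norm_nonneg _) Padic.norm_p_lt_one (by have := mem_range.mp hi; omega)
  simpa using (tendsto_pow_atTop_nhds_zero_of_norm_lt_one hnorm).const_mul _

lemma tendsto_volkenbornSum_sum_mul_pow {ι : Type*} (s : Finset ι) (c : ι → ℚ_[p]) (e : ι → ℕ) :
    Tendsto (volkenbornSum fun x => ∑ l ∈ s, c l * (x : ℚ_[p]) ^ e l) atTop
      (𝓝 (∑ l ∈ s, c l * (bernoulli (e l) : ℚ_[p]))) := by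
  simp only [funext (volkenbornSum_sum s c fun l x => (x : ℚ_[p]) ^ e l)]
  exact tendsto_finsetSum s fun l _ => (tendsto_volkenbornSum_pow (e l)).const_mul (c l)

end Volkenborn

section Bernstein

variable {R ι : Type*} [CommRing R]

lemma one_sub_pow_eq_sum (y : R) (d : ℕ) :
    (1 - y) ^ d = ∑ l ∈ range (d + 1), (d.choose l : R) * (-1) ^ l * y ^ l := by
  rw [sub_eq_neg_add, add_pow]
  exact Finset.sum_congr rfl fun l _ => by rw [neg_pow, one_pow, mul_one]; ring

lemma sum_tsub_mul_of_le {t : Finset ι} {k : ℕ} {n : ι → ℕ} (hk : ∀ i ∈ t, k ≤ n i) (m : ι → ℕ) :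
    ∑ i ∈ t, (n i - k) * m i = ∑ i ∈ t, n i * m i - (∑ i ∈ t, m i) * k := by
  simp only [Nat.sub_mul]
  rw [Finset.sum_tsub_distrib t fun i hi => Nat.mul_le_mul_right _ (hk i hi), Finset.sum_mul]
  simp only [mul_comm]

lemma prod_bernstein_pow_eq {t : Finset ι} {k : ℕ} {n : ι → ℕ} (hk : ∀ i ∈ t, k ≤ n i)
    (m : ι → ℕ) (y : R) :
    ∏ i ∈ t, ((n i).choose k * y ^ k * (1 - y) ^ (n i - k)) ^ m i =
      (∏ i ∈ t, ((n i).choose k : R) ^ m i) *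
        (y ^ ((∑ i ∈ t, m i) * k) *
          (1 - y) ^ (∑ i ∈ t, n i * m i - (∑ i ∈ t, m i) * k)) := by
  simp only [mul_pow, Finset.prod_mul_distrib, ← pow_mul, Finset.prod_pow_eq_pow_sum]
  rw [sum_tsub_mul_of_le hk, ← Finset.mul_sum, mul_comm k, mul_assoc]

end Bernstein

theorem volkenborn_bernstein_pow_prod_general (p : ℕ) [Fact p.Prime] (s : ℕ) (k : ℕ)
    (n m : Fin s → ℕ) (hk : ∀ i, k ≤ n i) :
    Filter.Tendsto
      (fun N : ℕ => (1 / (p : ℚ_[p]) ^ N) *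
        ∑ x ∈ Finset.range (p ^ N), ∏ i : Fin s,
          (((n i).choose k : ℚ_[p]) * (x : ℚ_[p]) ^ k *
            (1 - (x : ℚ_[p])) ^ (n i - k)) ^ (m i))
      Filter.atTop
      (nhds (((∏ i : Fin s, ((n i).choose k : ℚ) ^ (m i)) *
        ∑ l ∈ Finset.range ((∑ i : Fin s, n i * m i) - (∑ i : Fin s, m i) * k + 1),
          (((∑ i : Fin s, n i * m i) - (∑ i : Fin s, m i) * k).choose l : ℚ) * (-1 : ℚ) ^ l *
            bernoulli ((∑ i : Fin s, m i) * k + l) : ℚ) : ℚ_[p])) := by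
  set M := ∑ i, m i
  set d := ∑ i, n i * m i - M * k
  set C := ∏ i, ((n i).choose k : ℚ_[p]) ^ m i
  have hpoly : ∀ y : ℚ_[p],
      ∏ i, ((n i).choose k * y ^ k * (1 - y) ^ (n i - k)) ^ m i =
        ∑ l ∈ range (d + 1), C * (d.choose l * (-1) ^ l) * y ^ (M * k + l) := by
    intro y
    rw [prod_bernstein_pow_eq (fun i _ => hk i), one_sub_pow_eq_sum, Finset.mul_sum,
      Finset.mul_sum]
    exact Finset.sum_congr rfl fun l _ => by ring
  have hlim := tendsto_volkenbornSum_sum_mul_pow (p := p) (range (d + 1))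
    (fun l => C * (d.choose l * (-1) ^ l)) (fun l => M * k + l)
  rw [← funext fun x : ℕ => hpoly x] at hlim
  convert hlim using 2
  · rfl
  · push_cast
    rw [Finset.mul_sum]
    exact Finset.sum_congr rfl fun l _ => by ring

/-- `∫_{ℤ_p} B_{k,n₁}^{m₁}(x) ⋯ B_{k,n_s}^{m_s}(x) dμ₁(x)
    = C(n₁,k)^{m₁} ⋯ C(n_s,k)^{m_s} ∑_{l=0}^{T−Mk} C(T−Mk,l)(−1)^l B_{Mk+l}`,
where `M = m₁ + ⋯ + m_s` and `T = n₁m₁ + ⋯ + n_s m_s`. -/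
theorem volkenborn_bernstein_pow_prod (p : ℕ) [Fact p.Prime] (s : ℕ) (hs : 1 ≤ s) (k : ℕ)
    (n m : Fin s → ℕ) (hk : ∀ i, k ≤ n i) :
    Filter.Tendsto
      (fun N : ℕ => (1 / (p : ℚ_[p]) ^ N) *
        ∑ x ∈ Finset.range (p ^ N), ∏ i : Fin s,
          (((n i).choose k : ℚ_[p]) * (x : ℚ_[p]) ^ k *
            (1 - (x : ℚ_[p])) ^ (n i - k)) ^ (m i))
      Filter.atTop
      (nhds (((∏ i : Fin s, ((n i).choose k : ℚ) ^ (m i)) *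
        ∑ l ∈ Finset.range ((∑ i : Fin s, n i * m i) - (∑ i : Fin s, m i) * k + 1),
          (((∑ i : Fin s, n i * m i) - (∑ i : Fin s, m i) * k).choose l : ℚ) * (-1 : ℚ) ^ l *
            bernoulli ((∑ i : Fin s, m i) * k + l) : ℚ) : ℚ_[p])) :=
  volkenborn_bernstein_pow_prod_general p s k n m hk
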